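/- arXiv:2403.03330 — 9 statements merged into one kernel-verified Lean document; each statement's English description precedes it below -/
import Mathlib

section
/- For all non-negative integers s and l with l > s > 0, h(s+1, l) ≥ h(s, l+1). -/
/-- Expected number of rounds until one of two piles (sizes `n₁, n₂`) empties,
where each round removes one item from a pile chosen uniformly at random. -/
noncomputable def h2 : ℕ → ℕ → ℝ
  | _, 0 => 0
  | 0, _ => 0
  | n₁ + 1, n₂ + 1 => 1 + h2 n₁ (n₂ + 1) / 2 + h2 (n₁ + 1) n₂ / 2
termination_by n₁ n₂ => n₁ + n₂

lemma h2_zero_right (a : ℕ) : h2 a 0 = 0 := by rw [h2]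

lemma h2_zero_left (b : ℕ) : h2 0 b = 0 := by
  cases b with
  | zero => rw [h2]
  | succ b => simp [h2]

lemma h2_succ (a b : ℕ) :
    h2 (a + 1) (b + 1) = 1 + h2 a (b + 1) / 2 + h2 (a + 1) b / 2 := by
  rw [h2]

lemma h2_nonneg : ∀ n a b, a + b ≤ n → 0 ≤ h2 a b := by
  intro n
  induction n with
  | zero =>
    intro a b h
    obtain ⟨rfl, rfl⟩ : a = 0 ∧ b = 0 := by omega
    rw [h2_zero_right]
  | succ n ih =>
    intro a b h
    match a, b with
    | a, 0 => rw [h2_zero_right]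
    | 0, b => rw [h2_zero_left]
    | a + 1, b + 1 =>
      rw [h2_succ]
      have h1 := ih a (b + 1) (by omega)
      have h2 := ih (a + 1) b (by omega)
      linarith

lemma h2_symm : ∀ n a b, a + b ≤ n → h2 a b = h2 b a := by
  intro n
  induction n with
  | zero =>
    intro a b h
    obtain ⟨rfl, rfl⟩ : a = 0 ∧ b = 0 := by omega
    rfl
  | succ n ih =>
    intro a b h
    match a, b with
    | a, 0 => rw [h2_zero_right, h2_zero_left]
    | 0, b => rw [h2_zero_right, h2_zero_left]
    | a + 1, b + 1 =>
      rw [h2_succ, h2_succ, ih a (b + 1) (by omega), ih (a + 1) b (by omega)]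
      ring

lemma h2_key : ∀ n a b, a + b ≤ n → a + 1 ≤ b → h2 a (b + 1) ≤ h2 (a + 1) b := by
  intro n
  induction n with
  | zero => intro a b h hb; omega
  | succ n ih =>
    intro a b hab hb
    match a, b with
    | 0, b =>
      rw [h2_zero_left]
      exact h2_nonneg (1 + b) 1 b le_rfl
    | a + 1, c + 1 =>
      rw [h2_succ (a + 1) c, h2_succ a (c + 1)]
      have hkey : h2 a (c + 2) ≤ h2 (a + 2) c := by
        have h1 : h2 a (c + 2) ≤ h2 (a + 1) (c + 1) :=
          ih a (c + 1) (by omega) (by omega)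
        rcases Nat.lt_or_ge (a + 1) c with hc | hc
        · have h2' : h2 (a + 1) (c + 1) ≤ h2 (a + 2) c :=
            ih (a + 1) c (by omega) (by omega)
          linarith
        · -- c = a + 1
          have hc' : c = a + 1 := by omega
          subst hc'
          have hsym : h2 (a + 1) (a + 2) = h2 (a + 2) (a + 1) :=
            h2_symm (2 * a + 3) (a + 1) (a + 2) (by omega)
          linarith
      linarith

theorem stmt0 (s l : ℕ) (hs : 0 < s) (hl : s < l) :
    h2 (s + 1) l ≥ h2 s (l + 1) := by
  exact h2_key (s + l) s l le_rfl (by omega)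
end

section
/- For all positive integers n₁, n₂, h(n₁, n₂) ≤ 2·min(n₁, n₂). -/
lemma h2_le (n n₁ n₂ : ℕ) (hn : n₁ + n₂ = n) : h2 n₁ n₂ ≤ 2 * (min n₁ n₂ : ℝ) := by
  induction n using Nat.strong_induction_on generalizing n₁ n₂ with
  | _ n ih =>
    match n₁, n₂ with
    | _, 0 => simp [h2]
    | 0, _ + 1 => simp [h2]; positivity
    | a + 1, b + 1 =>
      rw [h2]
      have ha := ih (a + (b + 1)) (by omega) a (b + 1) rfl
      have hb := ih ((a + 1) + b) (by omega) (a + 1) b rfl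
      have key : (1 : ℝ) + (min a (b+1) : ℕ) + (min (a+1) b : ℕ) ≤
          2 * (min (a+1) (b+1) : ℕ) := by
        have : 1 + min a (b+1) + min (a+1) b ≤ 2 * min (a+1) (b+1) := by omega
        exact_mod_cast this
      push_cast at key ha hb ⊢
      linarith

theorem stmt1 (n₁ n₂ : ℕ) (h₁ : 0 < n₁) (h₂ : 0 < n₂) :
    h2 n₁ n₂ ≤ 2 * (min n₁ n₂ : ℝ) := h2_le _ _ _ rfl
end

section
/- (DILT, Don't Increase the Lonely Tower) For non-negative integers l > m ≥ s: h(l, m+1, s) ≥ h(l+1, m, s) and h(l, m, s+1) ≥ h(l+1, m, s). -/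
/-- Expected number of rounds until at most one of three piles remains nonempty,
where each round removes one item from a nonempty pile chosen uniformly at random. -/
noncomputable def h3 : ℕ → ℕ → ℕ → ℝ
  | 0, 0, _ => 0
  | 0, _ + 1, 0 => 0
  | _ + 1, 0, 0 => 0
  | 0, b + 1, c + 1 => 1 + (h3 0 b (c + 1) + h3 0 (b + 1) c) / 2
  | a + 1, 0, c + 1 => 1 + (h3 a 0 (c + 1) + h3 (a + 1) 0 c) / 2
  | a + 1, b + 1, 0 => 1 + (h3 a (b + 1) 0 + h3 (a + 1) b 0) / 2
  | a + 1, b + 1, c + 1 =>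
      1 + (h3 a (b + 1) (c + 1) + h3 (a + 1) b (c + 1) + h3 (a + 1) (b + 1) c) / 3
termination_by a b c => a + b + c

lemma h3_zz (c : ℕ) : h3 0 0 c = 0 := by rw [h3]
lemma h3_bz (b : ℕ) : h3 0 (b+1) 0 = 0 := by rw [h3]
lemma h3_az (a : ℕ) : h3 (a+1) 0 0 = 0 := by rw [h3]
lemma h3_r1 (b c : ℕ) : h3 0 (b+1) (c+1) = 1 + (h3 0 b (c + 1) + h3 0 (b + 1) c) / 2 := by
  rw [h3]
lemma h3_r2 (a c : ℕ) : h3 (a+1) 0 (c+1) = 1 + (h3 a 0 (c + 1) + h3 (a + 1) 0 c) / 2 := by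
  rw [h3]
lemma h3_r3 (a b : ℕ) : h3 (a+1) (b+1) 0 = 1 + (h3 a (b + 1) 0 + h3 (a + 1) b 0) / 2 := by
  rw [h3]
lemma h3_r4 (a b c : ℕ) : h3 (a+1) (b+1) (c+1)
    = 1 + (h3 a (b + 1) (c + 1) + h3 (a + 1) b (c + 1) + h3 (a + 1) (b + 1) c) / 3 := by
  rw [h3]

lemma h3_nonneg_aux : ∀ n a b c : ℕ, a + b + c ≤ n → 0 ≤ h3 a b c := by
  intro n
  induction n with
  | zero =>
    intro a b c h
    obtain rfl : a = 0 := by omega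
    obtain rfl : b = 0 := by omega
    rw [h3_zz]
  | succ n ih =>
    intro a b c h
    match a, b, c with
    | 0, 0, c => rw [h3_zz]
    | 0, b+1, 0 => rw [h3_bz]
    | a+1, 0, 0 => rw [h3_az]
    | 0, b+1, c+1 =>
      rw [h3_r1]
      have h1 := ih 0 b (c+1) (by omega)
      have h2 := ih 0 (b+1) c (by omega)
      linarith
    | a+1, 0, c+1 =>
      rw [h3_r2]
      have h1 := ih a 0 (c+1) (by omega)
      have h2 := ih (a+1) 0 c (by omega)
      linarith
    | a+1, b+1, 0 =>
      rw [h3_r3]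
      have h1 := ih a (b+1) 0 (by omega)
      have h2 := ih (a+1) b 0 (by omega)
      linarith
    | a+1, b+1, c+1 =>
      rw [h3_r4]
      have h1 := ih a (b+1) (c+1) (by omega)
      have h2 := ih (a+1) b (c+1) (by omega)
      have h3' := ih (a+1) (b+1) c (by omega)
      linarith

lemma h3_nonneg (a b c : ℕ) : 0 ≤ h3 a b c := h3_nonneg_aux (a+b+c) a b c le_rfl

lemma h3_sym12_aux : ∀ n a b c : ℕ, a + b + c ≤ n → h3 a b c = h3 b a c := by
  intro n
  induction n with
  | zero =>
    intro a b c h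
    obtain rfl : a = 0 := by omega
    obtain rfl : b = 0 := by omega
    rfl
  | succ n ih =>
    intro a b c h
    match a, b, c with
    | 0, 0, c => rfl
    | 0, b+1, 0 => rw [h3_bz, h3_az]
    | a+1, 0, 0 => rw [h3_bz, h3_az]
    | 0, b+1, c+1 =>
      rw [h3_r1, h3_r2, ih 0 b (c+1) (by omega), ih 0 (b+1) c (by omega)]
    | a+1, 0, c+1 =>
      rw [h3_r2, h3_r1, ih a 0 (c+1) (by omega), ih (a+1) 0 c (by omega)]
    | a+1, b+1, 0 =>
      rw [h3_r3, h3_r3, ih a (b+1) 0 (by omega), ih (a+1) b 0 (by omega)]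
      ring
    | a+1, b+1, c+1 =>
      rw [h3_r4, h3_r4, ih a (b+1) (c+1) (by omega), ih (a+1) b (c+1) (by omega),
        ih (a+1) (b+1) c (by omega)]
      ring

lemma h3_sym12 (a b c : ℕ) : h3 a b c = h3 b a c := h3_sym12_aux (a+b+c) a b c le_rfl

lemma h3_sym23_aux : ∀ n a b c : ℕ, a + b + c ≤ n → h3 a b c = h3 a c b := by
  intro n
  induction n with
  | zero =>
    intro a b c h
    obtain rfl : b = 0 := by omega
    obtain rfl : c = 0 := by omega
    rfl
  | succ n ih =>
    intro a b c h
    match a, b, c with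
    | a, 0, 0 => rfl
    | 0, b+1, 0 => rw [h3_bz, h3_zz]
    | 0, 0, c+1 => rw [h3_zz, h3_bz]
    | a+1, b+1, 0 => rw [h3_r3, h3_r2, ih a (b+1) 0 (by omega), ih (a+1) b 0 (by omega)]
    | a+1, 0, c+1 => rw [h3_r2, h3_r3, ih a 0 (c+1) (by omega), ih (a+1) 0 c (by omega)]
    | 0, b+1, c+1 =>
      rw [h3_r1, h3_r1, ih 0 b (c+1) (by omega), ih 0 (b+1) c (by omega)]
      ring
    | a+1, b+1, c+1 =>
      rw [h3_r4, h3_r4, ih a (b+1) (c+1) (by omega), ih (a+1) b (c+1) (by omega),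
        ih (a+1) (b+1) c (by omega)]
      ring

lemma h3_sym23 (a b c : ℕ) : h3 a b c = h3 a c b := h3_sym23_aux (a+b+c) a b c le_rfl

lemma h3_sym13 (a b c : ℕ) : h3 a b c = h3 c b a := by
  rw [h3_sym23, h3_sym12, h3_sym23]

/-- DILT claim: moving one item from the strictly tallest pile (allowing third pile up to
one more) does not decrease the expected duration. -/
def Dp (n : ℕ) : Prop :=
  ∀ a b c : ℕ, a + b + c < n → b ≤ a → c ≤ a + 1 → h3 (a+1) b c ≤ h3 a (b+1) c

/-- Averaged-move claim: moving an item to the small pile from one of the two big piles,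
averaged over the two choices, does not decrease the expected duration. -/
def AVp (n : ℕ) : Prop :=
  ∀ p b q : ℕ, p + b + q + 2 ≤ n → b ≤ p → b ≤ q →
    2 * h3 (p+1) b (q+1) ≤ h3 p (b+1) (q+1) + h3 (p+1) (b+1) q

lemma main_ind : ∀ n : ℕ, Dp n ∧ AVp n := by
  intro n
  induction n with
  | zero =>
    constructor
    · intro a b c h; omega
    · intro p b q h; omega
  | succ n ih =>
    obtain ⟨ihD, ihAV⟩ := ih
    have hD : Dp (n+1) := by
      intro a b c hsum hba hca
      rcases eq_or_lt_of_le hba with rfl | hblt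
      · -- b = a : equality by symmetry
        exact le_of_eq (h3_sym12 (b+1) b c)
      · -- b < a, so a = a' + 1
        obtain ⟨a', rfl⟩ : ∃ x, a = x + 1 := ⟨a - 1, by omega⟩
        match c with
        | 0 =>
          match b with
          | 0 =>
            rw [h3_az]
            exact h3_nonneg (a'+1) 1 0
          | b'+1 =>
            rw [show a' + 1 + 1 = (a' + 1) + 1 from rfl, h3_r3 (a'+1) b', h3_r3 a' (b'+1)]
            have h1 : h3 (a'+1) (b'+1) 0 ≤ h3 a' (b'+1+1) 0 :=
              ihD a' (b'+1) 0 (by omega) (by omega) (by omega)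
            have h2 : h3 (a'+1+1) b' 0 ≤ h3 (a'+1) (b'+1) 0 :=
              ihD (a'+1) b' 0 (by omega) (by omega) (by omega)
            linarith
        | c'+1 =>
          match b with
          | 0 =>
            rw [show a' + 1 + 1 = (a' + 1) + 1 from rfl, h3_r2 (a'+1) c', h3_r4 a' 0 c']
            rcases Nat.lt_or_ge c' (a'+1) with hc' | hc'
            · -- c' ≤ a'
              have hA : h3 (a'+1) 0 (c'+1) ≤ h3 a' 1 (c'+1) :=
                ihD a' 0 (c'+1) (by omega) (by omega) (by omega)
              have hC : h3 (a'+1+1) 0 c' ≤ h3 (a'+1) 1 c' :=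
                ihD (a'+1) 0 c' (by omega) (by omega) (by omega)
              have hXY : h3 (a'+1+1) c' 0 ≤ h3 (a'+1) (c'+1) 0 :=
                ihD (a'+1) c' 0 (by omega) (by omega) (by omega)
              have e1 : h3 (a'+1) 0 (c'+1) = h3 (a'+1) (c'+1) 0 := h3_sym23 _ _ _
              have e2 : h3 (a'+1+1) 0 c' = h3 (a'+1+1) c' 0 := h3_sym23 _ _ _
              linarith
            · -- c' = a' + 1, i.e. c = a + 1
              obtain rfl : c' = a' + 1 := by omega
              have eXY : h3 (a'+1+1) 0 (a'+1) = h3 (a'+1) 0 (a'+1+1) := h3_sym13 _ _ _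
              have hAV := ihAV a' 0 (a'+1) (by omega) (by omega) (by omega)
              -- 2 * h3 (a'+1) 0 (a'+2) ≤ h3 a' 1 (a'+2) + h3 (a'+1) 1 (a'+1)
              linarith
          | b''+1 =>
            rw [show a' + 1 + 1 = (a' + 1) + 1 from rfl, h3_r4 (a'+1) b'' c',
              h3_r4 a' (b''+1) c']
            rcases Nat.lt_or_ge c' (a'+1) with hc' | hc'
            · -- interior: c ≤ a
              have h1 : h3 (a'+1) (b''+1) (c'+1) ≤ h3 a' (b''+1+1) (c'+1) :=
                ihD a' (b''+1) (c'+1) (by omega) (by omega) (by omega)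
              have h2 : h3 (a'+1+1) b'' (c'+1) ≤ h3 (a'+1) (b''+1) (c'+1) :=
                ihD (a'+1) b'' (c'+1) (by omega) (by omega) (by omega)
              have h3' : h3 (a'+1+1) (b''+1) c' ≤ h3 (a'+1) (b''+1+1) c' :=
                ihD (a'+1) (b''+1) c' (by omega) (by omega) (by omega)
              linarith
            · -- c' = a' + 1, i.e. c = a + 1
              obtain rfl : c' = a' + 1 := by omega
              have e1 : h3 (a'+1+1) (b''+1) (a'+1) = h3 (a'+1) (b''+1) (a'+1+1) :=
                h3_sym13 _ _ _
              have hAV := ihAV a' (b''+1) (a'+1) (by omega) (by omega) (by omega)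
              -- 2 * h3 (a'+1) (b''+1) (a'+2) ≤ h3 a' (b''+2) (a'+2) + h3 (a'+1) (b''+2) (a'+1)
              have h2 : h3 (a'+1+1) b'' (a'+1+1) ≤ h3 (a'+1) (b''+1) (a'+1+1) :=
                ihD (a'+1) b'' (a'+1+1) (by omega) (by omega) (by omega)
              linarith
    refine ⟨hD, ?_⟩
    intro p b q hsum hbp hbq
    rcases eq_or_lt_of_le hbp with rfl | hbltp
    · -- b = p
      have e1 : h3 b (b+1) (q+1) = h3 (b+1) b (q+1) := h3_sym12 _ _ _
      have e2 : h3 (b+1) b (q+1) = h3 (q+1) b (b+1) := h3_sym13 _ _ _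
      have e3 : h3 (b+1) (b+1) q = h3 q (b+1) (b+1) := h3_sym13 _ _ _
      have hd := hD q b (b+1) (by omega) hbq (by omega)
      linarith
    rcases eq_or_lt_of_le hbq with rfl | hbltq
    · -- b = q, b < p
      have e1 : h3 (p+1) (b+1) b = h3 (p+1) b (b+1) := h3_sym23 _ _ _
      have hd := hD p b (b+1) (by omega) (by omega) (by omega)
      linarith
    · -- b < p, b < q
      obtain ⟨p', rfl⟩ : ∃ x, p = x + 1 := ⟨p - 1, by omega⟩
      obtain ⟨q', rfl⟩ : ∃ x, q = x + 1 := ⟨q - 1, by omega⟩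
      match b with
      | 0 =>
        rw [show p' + 1 + 1 = (p' + 1) + 1 from rfl, show q' + 1 + 1 = (q' + 1) + 1 from rfl,
          h3_r2 (p'+1) (q'+1), h3_r4 p' 0 (q'+1), h3_r4 (p'+1) 0 q']
        have h1 := ihAV p' 0 (q'+1) (by omega) (by omega) (by omega)
        have h2 := ihAV (p'+1) 0 q' (by omega) (by omega) (by omega)
        linarith
      | b''+1 =>
        rw [show p' + 1 + 1 = (p' + 1) + 1 from rfl, show q' + 1 + 1 = (q' + 1) + 1 from rfl,
          h3_r4 (p'+1) b'' (q'+1), h3_r4 p' (b''+1) (q'+1), h3_r4 (p'+1) (b''+1) q']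
        have h1 := ihAV p' (b''+1) (q'+1) (by omega) (by omega) (by omega)
        have h2 := ihAV (p'+1) (b''+1) q' (by omega) (by omega) (by omega)
        have h3' := ihAV (p'+1) b'' (q'+1) (by omega) (by omega) (by omega)
        linarith

theorem stmt3 (l m s : ℕ) (hlm : m < l) (hms : s ≤ m) :
    h3 l (m + 1) s ≥ h3 (l + 1) m s ∧ h3 l m (s + 1) ≥ h3 (l + 1) m s := by
  obtain ⟨hD, -⟩ := main_ind (l + m + s + 2)
  constructor
  · exact hD l m s (by omega) (by omega) (by omega)
  · have e1 : h3 l m (s+1) = h3 l (s+1) m := h3_sym23 _ _ _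
    have e2 : h3 (l+1) m s = h3 (l+1) s m := h3_sym23 _ _ _
    have hd := hD l s m (by omega) (by omega) (by omega)
    rw [ge_iff_le, e1, e2]
    exact hd
end

section
/- (CTT, Create Third Tower) For integers l ≥ m ≥ 2: h(l, m, 0) ≤ h(l-1, m-1, 2). -/
lemma V1 : ∀ b : ℕ, h3 1 b 0 = 2 - 2/2^b := by
  intro b
  induction b with
  | zero => rw [h3]; norm_num
  | succ b ih =>
      rw [h3, show h3 0 (b+1) 0 = 0 from by rw [h3], ih, pow_succ]
      have h : (2:ℝ)^b ≠ 0 := by positivity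
      field_simp; ring

lemma V1' : ∀ b : ℕ, h3 0 b 1 = 2 - 2/2^b := by
  intro b
  induction b with
  | zero => rw [h3]; norm_num
  | succ b ih =>
      rw [h3, show h3 0 (b+1) 0 = 0 from by rw [h3], ih, pow_succ]
      have h : (2:ℝ)^b ≠ 0 := by positivity
      field_simp; ring

lemma V2 : ∀ b : ℕ, h3 2 b 0 = 4 - ((b:ℝ)+4)/2^b := by
  intro b
  induction b with
  | zero => rw [h3]; norm_num
  | succ b ih =>
      rw [h3, V1, ih, pow_succ]
      have h : (2:ℝ)^b ≠ 0 := by positivity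
      push_cast
      field_simp; ring

lemma V2' : ∀ b : ℕ, h3 0 b 2 = 4 - ((b:ℝ)+4)/2^b := by
  intro b
  induction b with
  | zero => rw [h3]; norm_num
  | succ b ih =>
      rw [h3, V1', ih, pow_succ]
      have h : (2:ℝ)^b ≠ 0 := by positivity
      push_cast
      field_simp; ring

lemma V3 : ∀ b : ℕ, h3 1 b 1 = 7/2 + (3/2)/3^b - 4/2^b := by
  intro b
  induction b with
  | zero =>
      rw [h3, show h3 0 0 1 = 0 from by rw [h3], show h3 1 0 0 = 0 from by rw [h3]]
      norm_num
  | succ b ih =>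
      rw [h3, V1', ih, V1, pow_succ, pow_succ]
      have h : (2:ℝ)^b ≠ 0 := by positivity
      have h3' : (3:ℝ)^b ≠ 0 := by positivity
      field_simp; ring

lemma V4 : ∀ b : ℕ, h3 1 b 2 = 21/4 + (9/4 + (b:ℝ)/2)/3^b - ((b:ℝ)+6)/2^b := by
  intro b
  induction b with
  | zero =>
      rw [h3, show h3 0 0 2 = 0 from by rw [h3],
          show h3 1 0 1 = (1 : ℝ) from by rw [h3, h3, h3]; norm_num]
      norm_num
  | succ b ih =>
      rw [h3, V2', ih, V3, pow_succ, pow_succ]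
      have h : (2:ℝ)^b ≠ 0 := by positivity
      have h3' : (3:ℝ)^b ≠ 0 := by positivity
      push_cast
      field_simp; ring
lemma CL_base : ∀ b : ℕ, h3 2 b 0 ≤ 2 * h3 1 (b+1) 0 := by
  intro b
  rw [V2, V1, pow_succ]
  have h : (0:ℝ) < 2^b := by positivity
  have hb : (0:ℝ) ≤ (b:ℝ) := by positivity
  have key : 2 * (2 - 2/(2^b*2)) - (4 - ((b:ℝ)+4)/2^b) = ((b:ℝ)+2)/2^b := by
    field_simp; ring
  have : (0:ℝ) ≤ ((b:ℝ)+2)/2^b := by positivity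
  linarith

lemma I2_base : ∀ b : ℕ, h3 1 (b+2) 0 + h3 2 (b+1) 0 ≤ 2 * h3 1 (b+1) 1 := by
  intro b
  rw [V1, V2, V3]
  have h2 : (0:ℝ) < 2^b := by positivity
  have h3' : (0:ℝ) < 3^b := by positivity
  have hb : (0:ℝ) ≤ (b:ℝ) := by positivity
  have hx : (1:ℝ) ≤ 2^b := one_le_pow₀ (by norm_num)
  push_cast
  rw [show b+2 = b+1+1 from rfl, pow_succ, pow_succ, pow_succ]
  have key : 2 * (7/2 + 3/2/(3^b*3) - 4/(2^b*2)) - ((2 - 2/(2^b*2*2)) + (4 - ((b:ℝ)+1+4)/(2^b*2)))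
      = (2*((2:ℝ)^b - 1)*3^b + 2*2^b + (b:ℝ)*3^b) / (2*2^b*3^b) := by
    field_simp; ring
  have hnum : (0:ℝ) ≤ 2*((2:ℝ)^b - 1)*3^b + 2*2^b + (b:ℝ)*3^b := by nlinarith
  have : (0:ℝ) ≤ (2*((2:ℝ)^b - 1)*3^b + 2*2^b + (b:ℝ)*3^b) / (2*2^b*3^b) := by positivity
  linarith

lemma natF : ∀ b : ℕ, 2 ≤ b → 2*b+14 ≤ 5*2^b := by
  intro b hb
  induction b with
  | zero => omega
  | succ b ih =>
      rcases Nat.lt_or_ge b 2 with h | h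
      · interval_cases b <;> simp_all
      · have := ih h; rw [pow_succ]; omega

lemma B1 : ∀ b : ℕ, h3 2 (b+2) 0 ≤ h3 1 (b+1) 2 := by
  intro b
  rw [V2, V4]
  have h2 : (0:ℝ) < 2^(b+1) := by positivity
  have h3' : (0:ℝ) < 3^(b+1) := by positivity
  have key : (21/4 + (9/4 + ((b:ℝ)+1)/2)/3^(b+1) - (((b:ℝ)+1)+6)/2^(b+1))
      - (4 - (((b:ℝ)+2)+4)/2^(b+2))
      = (5*2^(b+1)*3^(b+1) + (2*((b:ℝ)+1)+9)*2^(b+1) - (2*((b:ℝ)+1)+14)*3^(b+1))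
        / (4*2^(b+1)*3^(b+1)) := by
    rw [show b+2 = b+1+1 from rfl, pow_succ (2:ℝ) (b+1)]
    field_simp; ring
  push_cast
  rw [← sub_nonneg]
  push_cast at key
  rw [key]
  apply div_nonneg _ (by positivity)
  rcases Nat.eq_zero_or_pos b with rfl | hbpos
  · norm_num
  · have hF : (2*(b+1)+14 : ℕ) ≤ 5*2^(b+1) := natF (b+1) (by omega)
    have hF' : (2*((b:ℝ)+1)+14) ≤ 5*2^(b+1) := by exact_mod_cast hF
    have hb : (0:ℝ) ≤ (b:ℝ) := by positivity
    nlinarith [h2, h3', mul_pos h2 h3']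

lemma h3_swap : ∀ a b c : ℕ, h3 a b c = h3 b a c := by
  have key : ∀ n a b c : ℕ, a + b + c ≤ n → h3 a b c = h3 b a c := by
    intro n
    induction n with
    | zero =>
        intro a b c h
        obtain rfl : a = 0 := by omega
        obtain rfl : b = 0 := by omega
        rfl
    | succ n ih =>
        intro a b c h
        rcases a with _ | a
        · rcases b with _ | b
          · rfl
          · rcases c with _ | c
            · rw [show h3 0 (b+1) 0 = 0 from by rw [h3], show h3 (b+1) 0 0 = 0 from by rw [h3]]
            · rw [show h3 0 (b+1) (c+1) = 1 + (h3 0 b (c+1) + h3 0 (b+1) c) / 2 from by rw [h3],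
                  show h3 (b+1) 0 (c+1) = 1 + (h3 b 0 (c+1) + h3 (b+1) 0 c) / 2 from by rw [h3],
                  ih 0 b (c+1) (by omega), ih 0 (b+1) c (by omega)]
        · rcases b with _ | b
          · rcases c with _ | c
            · rw [show h3 (a+1) 0 0 = 0 from by rw [h3], show h3 0 (a+1) 0 = 0 from by rw [h3]]
            · rw [show h3 (a+1) 0 (c+1) = 1 + (h3 a 0 (c+1) + h3 (a+1) 0 c) / 2 from by rw [h3],
                  show h3 0 (a+1) (c+1) = 1 + (h3 0 a (c+1) + h3 0 (a+1) c) / 2 from by rw [h3],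
                  ih a 0 (c+1) (by omega), ih (a+1) 0 c (by omega)]
          · rcases c with _ | c
            · rw [show h3 (a+1) (b+1) 0 = 1 + (h3 a (b+1) 0 + h3 (a+1) b 0) / 2 from by rw [h3],
                  show h3 (b+1) (a+1) 0 = 1 + (h3 b (a+1) 0 + h3 (b+1) a 0) / 2 from by rw [h3],
                  ih a (b+1) 0 (by omega), ih (a+1) b 0 (by omega)]
              ring
            · rw [show h3 (a+1) (b+1) (c+1) =
                    1 + (h3 a (b+1) (c+1) + h3 (a+1) b (c+1) + h3 (a+1) (b+1) c) / 3 from by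
                      rw [h3],
                  show h3 (b+1) (a+1) (c+1) =
                    1 + (h3 b (a+1) (c+1) + h3 (b+1) a (c+1) + h3 (b+1) (a+1) c) / 3 from by
                      rw [h3],
                  ih a (b+1) (c+1) (by omega), ih (a+1) b (c+1) (by omega),
                  ih (a+1) (b+1) c (by omega)]
              ring
  exact fun a b c => key (a+b+c) a b c le_rfl

/-- concavity of the two-pile value along antidiagonals -/
lemma CL : ∀ n a b : ℕ, a + b ≤ n → h3 a (b+2) 0 + h3 (a+2) b 0 ≤ 2 * h3 (a+1) (b+1) 0 := by
  intro n
  induction n with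
  | zero =>
      intro a b hab
      obtain rfl : a = 0 := by omega
      obtain rfl : b = 0 := by omega
      rw [show h3 0 2 0 = 0 from by rw [h3]]
      simpa using CL_base 0
  | succ n ih =>
      intro a b hab
      rcases a with _ | A
      · rw [show h3 0 (b+2) 0 = 0 from by rw [h3]]
        simpa using CL_base b
      · rcases b with _ | B
        · rw [show h3 (A+3) 0 0 = 0 from by rw [h3], h3_swap (A+1) 2 0, h3_swap (A+2) 1 0]
          simpa using CL_base (A+1)
        · have e1 : h3 (A+1) (B+3) 0 = 1 + (h3 A (B+3) 0 + h3 (A+1) (B+2) 0) / 2 := by rw [h3]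
          have e2 : h3 (A+3) (B+1) 0 = 1 + (h3 (A+2) (B+1) 0 + h3 (A+3) B 0) / 2 := by rw [h3]
          have e3 : h3 (A+2) (B+2) 0 = 1 + (h3 (A+1) (B+2) 0 + h3 (A+2) (B+1) 0) / 2 := by
            rw [h3]
          have ih1 : h3 A (B+3) 0 + h3 (A+2) (B+1) 0 ≤ 2 * h3 (A+1) (B+2) 0 :=
            ih A (B+1) (by omega)
          have ih2 : h3 (A+1) (B+2) 0 + h3 (A+3) B 0 ≤ 2 * h3 (A+2) (B+1) 0 :=
            ih (A+1) B (by omega)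
          rw [e1, e2, e3]
          linarith
  
/-- key inequality: two-pile spread is at most twice the value with an extra singleton pile -/
lemma I2L : ∀ n a b : ℕ, a + b ≤ n →
    h3 (a+1) (b+2) 0 + h3 (a+2) (b+1) 0 ≤ 2 * h3 (a+1) (b+1) 1 := by
  intro n
  induction n with
  | zero =>
      intro a b hab
      obtain rfl : a = 0 := by omega
      obtain rfl : b = 0 := by omega
      exact I2_base 0
  | succ n ih =>
      intro a b hab
      rcases a with _ | A
      · exact I2_base b
      · rcases b with _ | B
        · rw [h3_swap (A+2) 2 0, h3_swap (A+3) 1 0, h3_swap (A+2) 1 1]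
          have h : h3 1 (A+3) 0 + h3 2 (A+2) 0 ≤ 2 * h3 1 (A+2) 1 := I2_base (A+1)
          linarith
        · have e1 : h3 (A+2) (B+3) 0 = 1 + (h3 (A+1) (B+3) 0 + h3 (A+2) (B+2) 0) / 2 := by
            rw [h3]
          have e2 : h3 (A+3) (B+2) 0 = 1 + (h3 (A+2) (B+2) 0 + h3 (A+3) (B+1) 0) / 2 := by
            rw [h3]
          have e3 : h3 (A+2) (B+2) 1 =
              1 + (h3 (A+1) (B+2) 1 + h3 (A+2) (B+1) 1 + h3 (A+2) (B+2) 0) / 3 := by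
            conv_lhs => rw [h3]
          have ih1 : h3 (A+1) (B+3) 0 + h3 (A+2) (B+2) 0 ≤ 2 * h3 (A+1) (B+2) 1 :=
            ih A (B+1) (by omega)
          have ih2 : h3 (A+2) (B+2) 0 + h3 (A+3) (B+1) 0 ≤ 2 * h3 (A+2) (B+1) 1 :=
            ih (A+1) B (by omega)
          have hc : h3 (A+1) (B+3) 0 + h3 (A+3) (B+1) 0 ≤ 2 * h3 (A+2) (B+2) 0 :=
            CL (A+B+2) (A+1) (B+1) (by omega)
          rw [e1, e2, e3]
          linarith

/-- main lemma -/
lemma TL : ∀ n a b : ℕ, a + b ≤ n → h3 (a+2) (b+2) 0 ≤ h3 (a+1) (b+1) 2 := by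
  intro n
  induction n with
  | zero =>
      intro a b hab
      obtain rfl : a = 0 := by omega
      obtain rfl : b = 0 := by omega
      exact B1 0
  | succ n ih =>
      intro a b hab
      rcases a with _ | A
      · exact B1 b
      · rcases b with _ | B
        · rw [h3_swap (A+3) 2 0, h3_swap (A+2) 1 2]
          have h : h3 2 (A+3) 0 ≤ h3 1 (A+2) 2 := B1 (A+1)
          linarith
        · have e1 : h3 (A+3) (B+3) 0 = 1 + (h3 (A+2) (B+3) 0 + h3 (A+3) (B+2) 0) / 2 := by
            rw [h3]
          have e2 : h3 (A+2) (B+2) 2 =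
              1 + (h3 (A+1) (B+2) 2 + h3 (A+2) (B+1) 2 + h3 (A+2) (B+2) 1) / 3 := by
            conv_lhs => rw [h3]
          have ih1 : h3 (A+2) (B+3) 0 ≤ h3 (A+1) (B+2) 2 := ih A (B+1) (by omega)
          have ih2 : h3 (A+3) (B+2) 0 ≤ h3 (A+2) (B+1) 2 := ih (A+1) B (by omega)
          have hk : h3 (A+2) (B+3) 0 + h3 (A+3) (B+2) 0 ≤ 2 * h3 (A+2) (B+2) 1 :=
            I2L (A+B+2) (A+1) (B+1) (by omega)
          rw [e1, e2]
          linarith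

theorem stmt6 (l m : ℕ) (hlm : m ≤ l) (hm : 2 ≤ m) :
    h3 l m 0 ≤ h3 (l - 1) (m - 1) 2 := by
  obtain ⟨b, rfl⟩ : ∃ b, m = b + 2 := ⟨m - 2, by omega⟩
  obtain ⟨a, rfl⟩ : ∃ a, l = a + 2 := ⟨l - 2, by omega⟩
  simpa using TL (a+b) a b le_rfl
end

section
/- (THTB) For integers l ≥ m > 0: h(l, m, 0) ≤ h(l-1, m-1, 0) + 2. -/
lemma h3_zero_left (b : ℕ) : h3 0 b 0 = 0 := by cases b <;> rw [h3]

lemma h3_zero_mid (a : ℕ) : h3 a 0 0 = 0 := by cases a <;> rw [h3]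

lemma h3_a10 (a : ℕ) : h3 a 1 0 ≤ 2 := by
  induction a with
  | zero => rw [h3]; norm_num
  | succ a ih =>
    rw [h3, h3_zero_mid]
    linarith

lemma h3_1b0 (b : ℕ) : h3 1 b 0 ≤ 2 := by
  induction b with
  | zero => rw [h3]; norm_num
  | succ b ih =>
    rw [h3, h3_zero_left]
    linarith

lemma h3_K (a b : ℕ) : h3 a (b + 1) 0 + h3 (a + 1) b 0 ≤ 2 * h3 a b 0 + 2 := by
  induction a generalizing b with
  | zero =>
    rw [h3_zero_left, h3_zero_left]
    have := h3_1b0 b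
    linarith
  | succ a ih =>
    induction b with
    | zero =>
      rw [h3_zero_mid, h3_zero_mid]
      have := h3_a10 (a + 1)
      linarith
    | succ b ihb =>
      have h1 : h3 (a + 1) (b + 2) 0
          = 1 + (h3 a (b + 2) 0 + h3 (a + 1) (b + 1) 0) / 2 := by rw [h3]
      have h2 : h3 (a + 2) (b + 1) 0
          = 1 + (h3 (a + 1) (b + 1) 0 + h3 (a + 2) b 0) / 2 := by rw [h3]
      have h3' : h3 (a + 1) (b + 1) 0
          = 1 + (h3 a (b + 1) 0 + h3 (a + 1) b 0) / 2 := by rw [h3]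
      have hK1 := ih (b + 1)
      have hK2 := ihb
      linarith

theorem stmt7 (l m : ℕ) (hlm : m ≤ l) (hm : 0 < m) :
    h3 l m 0 ≤ h3 (l - 1) (m - 1) 0 + 2 := by
  obtain ⟨b, rfl⟩ : ∃ b, m = b + 1 := ⟨m - 1, by omega⟩
  obtain ⟨a, rfl⟩ : ∃ a, l = a + 1 := ⟨l - 1, by omega⟩
  simp only [Nat.add_sub_cancel]
  rw [h3]
  have := h3_K a b
  linarith
end

section
/- With P₁ := Σ_{r=1}^{n₁} p_r, P₂ := Σ_{r=1}^{n₂} q_r, E₁ := Σ_{r=1}^{n₁} r·p_r, E₂ := Σ_{r=1}^{n₂} r·q_r, where p_r = C(N-r-1, n₁-r)(1/2)^{N-r} and q_r = C(N-r-1, n₂-r)(1/2)^{N-r}: E₁ + E₂ = (n₁ - n₂)(P₁ - P₂) + (N-1)·C(N-2, n₁-1)·(1/2)^{N-2}. -/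
/-!
For `b ≥ 1` put `g s = s · C(b+s-1, s) · 2^{-(b+s-1)}`. The absorption identity
`(b+s) C(b+s-1, s) = (s+1) C(b+s, s+1)` gives `(b - s) C(b+s-1, s) 2^{-(b+s)} = g (s+1) - g s`.
Substituting `s = a - r` turns `Σ_{r=1}^{a} (r - (a - b)) p_r` into this telescoping sum, so
`E₁ = (n₁ - n₂) P₁ + n₁ C(N-1, n₁) 2^{-(N-1)}`, symmetrically for `E₂`, and both boundary terms
equal `(N-1) C(N-2, n₁-1) 2^{-(N-1)}`.
-/

open Finset

lemma sub_mul_choose_mul_half_pow_eq_sub (k m : ℕ) :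
    ((k + 1 : ℝ) - m) * ((k + m).choose m * (1 / 2) ^ (k + 1 + m))
      = (m + 1 : ℕ) * ((k + (m + 1)).choose (m + 1) : ℝ) * (1 / 2) ^ (k + (m + 1))
        - m * ((k + m).choose m : ℝ) * (1 / 2) ^ (k + m) := by
  have hc : ((k + m + 1 : ℕ) : ℝ) * (k + m).choose m
      = (k + m + 1).choose (m + 1) * (m + 1 : ℕ) := by
    exact_mod_cast Nat.add_one_mul_choose_eq (k + m) m
  push_cast at hc ⊢
  linear_combination ((1 / 2 : ℝ) ^ (k + m) * (1 / 2)) * hc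

lemma sum_range_sub_mul_choose_mul_half_pow (k a : ℕ) :
    ∑ s ∈ range a, ((k + 1 : ℝ) - s) * ((k + s).choose s * (1 / 2) ^ (k + 1 + s))
      = a * ((k + a).choose a : ℝ) * (1 / 2) ^ (k + a) := by
  simp_rw [sub_mul_choose_mul_half_pow_eq_sub]
  rw [sum_range_sub (fun s => (s : ℝ) * ((k + s).choose s : ℝ) * (1 / 2) ^ (k + s))]
  simp

lemma sum_Icc_eq_sum_range_reflect {M : Type*} [AddCommMonoid M] (f : ℕ → M) (a : ℕ) :
    ∑ r ∈ Icc 1 a, f r = ∑ s ∈ range a, f (a - s) := by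
  rw [← Nat.Ico_zero_eq_range, sum_Ico_reflect f 0 (Nat.le_succ a), Nat.add_sub_cancel_left]
  rfl

lemma sum_Icc_mul_choose_mul_half_pow (a b : ℕ) (hb : 0 < b) :
    ∑ r ∈ Icc 1 a, (r : ℝ) * ((a + b - r - 1).choose (a - r) * (1 / 2) ^ (a + b - r))
      = ((a : ℝ) - b) * ∑ r ∈ Icc 1 a, ((a + b - r - 1).choose (a - r) : ℝ) * (1 / 2) ^ (a + b - r)
        + a * ((a + b - 1).choose a : ℝ) * (1 / 2) ^ (a + b - 1) := by
  obtain ⟨k, rfl⟩ : ∃ k, b = k + 1 := ⟨b - 1, by omega⟩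
  rw [mul_sum, ← sub_eq_iff_eq_add', ← sum_sub_distrib, sum_Icc_eq_sum_range_reflect,
    show a + (k + 1) - 1 = k + a by omega, ← sum_range_sub_mul_choose_mul_half_pow]
  refine sum_congr rfl fun s hs => ?_
  have hsa : s < a := mem_range.mp hs
  rw [show a + (k + 1) - (a - s) - 1 = k + s by omega, show a - (a - s) = s by omega,
    show a + (k + 1) - (a - s) = k + 1 + s by omega, Nat.cast_sub hsa.le]
  push_cast
  ring

/-- With `p r = C(N-r-1, n₁-r)(1/2)^(N-r)` and `q r = C(N-r-1, n₂-r)(1/2)^(N-r)`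
(`N = n₁ + n₂`), `P₁ = Σ_{r=1}^{n₁} p r`, `P₂ = Σ_{r=1}^{n₂} q r`,
`E₁ = Σ_{r=1}^{n₁} r·p r`, `E₂ = Σ_{r=1}^{n₂} r·q r`, we have
`E₁ + E₂ = (n₁ - n₂)(P₁ - P₂) + (N-1)·C(N-2, n₁-1)·(1/2)^(N-2)`. -/
theorem stmt13 (n₁ n₂ : ℕ) (h₁ : 0 < n₁) (h₂ : 0 < n₂) :
    (∑ r ∈ Finset.Icc 1 n₁, (r : ℝ) *
        ((Nat.choose (n₁ + n₂ - r - 1) (n₁ - r) : ℝ) * (1 / 2) ^ (n₁ + n₂ - r)))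
    + (∑ r ∈ Finset.Icc 1 n₂, (r : ℝ) *
        ((Nat.choose (n₁ + n₂ - r - 1) (n₂ - r) : ℝ) * (1 / 2) ^ (n₁ + n₂ - r)))
    = ((n₁ : ℝ) - n₂) *
        ((∑ r ∈ Finset.Icc 1 n₁,
            (Nat.choose (n₁ + n₂ - r - 1) (n₁ - r) : ℝ) * (1 / 2) ^ (n₁ + n₂ - r))
         - (∑ r ∈ Finset.Icc 1 n₂,
            (Nat.choose (n₁ + n₂ - r - 1) (n₂ - r) : ℝ) * (1 / 2) ^ (n₁ + n₂ - r)))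
      + ((n₁ : ℝ) + n₂ - 1) * (Nat.choose (n₁ + n₂ - 2) (n₁ - 1) : ℝ) *
          (1 / 2) ^ (n₁ + n₂ - 2) := by
  have E₂ := sum_Icc_mul_choose_mul_half_pow n₂ n₁ h₁
  rw [add_comm n₂ n₁] at E₂
  rw [sum_Icc_mul_choose_mul_half_pow n₁ n₂ h₂, E₂]
  obtain ⟨k, rfl⟩ : ∃ k, n₁ = k + 1 := ⟨n₁ - 1, by omega⟩
  obtain ⟨l, rfl⟩ : ∃ l, n₂ = l + 1 := ⟨n₂ - 1, by omega⟩
  rw [show k + 1 + (l + 1) - 1 = k + l + 1 by omega, show k + 1 + (l + 1) - 2 = k + l by omega,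
    Nat.add_sub_cancel]
  have c₁ : ((k + l + 1 : ℕ) : ℝ) * (k + l).choose k
      = (k + l + 1).choose (k + 1) * (k + 1 : ℕ) := by
    exact_mod_cast Nat.add_one_mul_choose_eq (k + l) k
  have c₂ : ((k + l + 1 : ℕ) : ℝ) * (k + l).choose k
      = (k + l + 1).choose (l + 1) * (l + 1 : ℕ) := by
    rw [Nat.choose_symm_add]
    exact_mod_cast Nat.add_one_mul_choose_eq (k + l) l
  push_cast at c₁ c₂ ⊢
  linear_combination (-(1 / 2 : ℝ) ^ (k + l) / 2) * (c₁ + c₂)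
end

section
/- (Monotonicity of winning probability) Define P(n₁, n₂) as the probability that, in the two-pile uniform removal process starting from (n₁, n₂), pile 2 empties first. Then n₁ ≥ n₂ > 0 implies P(n₁, n₂) ≥ P(n₂, n₁). -/
/-- `P2 n₁ n₂` is the probability that pile 2 empties first in the two-pile uniform
removal process starting from `(n₁, n₂)`: `P2 (n₁+1) 0 = 1`, `P2 0 (n₂+1) = 0`, and
`P2 n₁ n₂ = (P2 (n₁-1) n₂ + P2 n₁ (n₂-1))/2` for `n₁, n₂ ≥ 1`. -/
noncomputable def P2 : ℕ → ℕ → ℝ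
  | 0, 0 => 0
  | _ + 1, 0 => 1
  | 0, _ + 1 => 0
  | n₁ + 1, n₂ + 1 => (P2 n₁ (n₂ + 1) + P2 (n₁ + 1) n₂) / 2
termination_by n₁ n₂ => n₁ + n₂

lemma P2_key (n : ℕ) : ∀ a b : ℕ, a + b ≤ n → b ≤ a → P2 b a ≤ P2 a b := by
  induction n with
  | zero =>
    intro a b hn hba
    have ha : a = 0 := by omega
    have hb : b = 0 := by omega
    subst ha; subst hb; exact le_refl _
  | succ n ih =>
    intro a b hn hba
    match a, b with
    | 0, 0 => exact le_refl _
    | a + 1, 0 =>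
      simp only [P2]
      induction a with
      | zero => norm_num [P2]
      | succ k _ => norm_num [P2]
    | a + 1, b + 1 =>
      have hrec1 : P2 (a+1) (b+1) = (P2 a (b+1) + P2 (a+1) b) / 2 := by rw [P2]
      have hrec2 : P2 (b+1) (a+1) = (P2 b (a+1) + P2 (b+1) a) / 2 := by rw [P2]
      rw [hrec1, hrec2]
      rcases eq_or_lt_of_le (show b ≤ a by omega) with heq | hlt
      · subst heq; linarith
      · have h1 : P2 (b+1) a ≤ P2 a (b+1) := ih a (b+1) (by omega) (by omega)
        have h2 : P2 b (a+1) ≤ P2 (a+1) b := ih (a+1) b (by omega) (by omega)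
        linarith

theorem stmt14 (n₁ n₂ : ℕ) (h : n₁ ≥ n₂) (h₂ : 0 < n₂) :
    P2 n₁ n₂ ≥ P2 n₂ n₁ := P2_key (n₁ + n₂) n₁ n₂ le_rfl h
end

section
/- With the counting function h_i as above: h_i(m₁ + x, m₂,…,m_j) = h_i(m₁, m₂,…,m_j) + Σ_{r=0}^{x-1} h_{i-m₁-r}(m₂,…,m_j) · C(i, m₁ + r) for every non-negative integer x. -/
/-- `cc i j m` is the number of colorings of `i` labeled objects with `j` colors
in which color `c` is used strictly fewer than `m c` times. -/
def cc (i j : ℕ) (m : Fin j → ℕ) : ℕ :=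
  (Finset.univ.filter fun f : Fin i → Fin j =>
    ∀ c, (Finset.univ.filter fun x => f x = c).card < m c).card

/-!
Raising the bound on colour `0` from `M` to `M + 1` adds exactly the colorings that use colour `0`
exactly `M` times. Such a coloring is a choice of the `M` objects coloured `0`, in `C(i, M)` ways,
together with a coloring of the remaining `i - M` objects by the other colours within their
bounds. Summing these increments for `M = m₁, …, m₁ + x - 1` gives the identity.
-/

open Finset

def boundedColorings (α : Type*) [Fintype α] [DecidableEq α] {j : ℕ} (m : Fin j → ℕ) :
    Finset (α → Fin j) :=
  {f | ∀ c, #{x | f x = c} < m c}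

section

variable {α : Type*} [Fintype α] [DecidableEq α] {j : ℕ}

omit [DecidableEq α] in
lemma card_filter_comp_equiv {β γ : Type*} [Fintype β] [DecidableEq γ] (e : α ≃ β)
    (f : β → γ) (c : γ) : #{x | f (e x) = c} = #{y | f y = c} :=
  card_equiv e (by simp)

lemma card_boundedColorings_congr {β : Type*} [Fintype β] [DecidableEq β] (e : α ≃ β)
    (m : Fin j → ℕ) : #(boundedColorings α m) = #(boundedColorings β m) :=
  card_equiv (e.arrowCongr (Equiv.refl _)) fun f => by
    simp [boundedColorings, Equiv.arrowCongr_apply, ← card_filter_comp_equiv e.symm]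

lemma card_boundedColorings (m : Fin j → ℕ) :
    #(boundedColorings α m) = cc (Fintype.card α) j m :=
  card_boundedColorings_congr (Fintype.equivFin α) m

def extendZero (S : Finset α) (g : {x // x ∉ S} → Fin j) : α → Fin (j + 1) :=
  fun x => if h : x ∈ S then 0 else (g ⟨x, h⟩).succ

variable {S : Finset α}

lemma filter_extendZero_eq_zero (g : {x // x ∉ S} → Fin j) :
    ({x | extendZero S g x = 0} : Finset α) = S := by
  ext x
  by_cases hx : x ∈ S <;> simp [extendZero, hx]

lemma card_filter_extendZero_eq_succ (g : {x // x ∉ S} → Fin j) (c : Fin j) :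
    #{x | extendZero S g x = c.succ} = #{y | g y = c} := by
  rw [← card_map (Function.Embedding.subtype _)]
  congr 1
  ext x
  simp only [mem_filter, mem_univ, true_and, mem_map, Function.Embedding.coe_subtype]
  by_cases hx : x ∈ S <;> simp [extendZero, hx, eq_comm (a := (0 : Fin (j + 1)))]

omit [Fintype α] in
lemma extendZero_injective : Function.Injective (extendZero (j := j) S) := by
  intro g₁ g₂ h
  funext y
  simpa [extendZero, y.2] using congrFun h y.1

lemma mem_range_extendZero {f : α → Fin (j + 1)} (hf : ({x | f x = 0} : Finset α) = S) :
    f ∈ Set.range (extendZero S) := by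
  have hne (y : {x // x ∉ S}) : f y ≠ 0 := fun h => y.2 (by simp [← hf, h])
  refine ⟨fun y => (f y).pred (hne y), funext fun x => ?_⟩
  by_cases hx : x ∈ S
  · have h0 : f x = 0 := by simpa [← hf] using hx
    simp [extendZero, hx, h0]
  · simp [extendZero, hx]

lemma card_colorings_filter_zero_eq (m : Fin j → ℕ) :
    #{f : α → Fin (j + 1) |
        ({x | f x = 0} : Finset α) = S ∧ ∀ c, #{x | f x = c.succ} < m c} =
      cc (Fintype.card α - #S) j m := by
  have hcard : Fintype.card {x // x ∉ S} = Fintype.card α - #S := by simp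
  rw [← hcard, ← card_boundedColorings, ← card_image_of_injective _ extendZero_injective]
  congr 1
  ext f
  simp only [mem_filter, mem_univ, true_and, mem_image, boundedColorings]
  constructor
  · rintro ⟨hS, hm⟩
    obtain ⟨g, rfl⟩ := mem_range_extendZero hS
    exact ⟨g, by simpa [card_filter_extendZero_eq_succ] using hm, rfl⟩
  · rintro ⟨g, hg, rfl⟩
    simpa [card_filter_extendZero_eq_succ, filter_extendZero_eq_zero] using hg

lemma card_colorings_card_zero_eq (k : ℕ) (m : Fin j → ℕ) :
    #{f : α → Fin (j + 1) | #{x | f x = 0} = k ∧ ∀ c, #{x | f x = c.succ} < m c} =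
      cc (Fintype.card α - k) j m * (Fintype.card α).choose k := by
  rw [card_eq_sum_card_fiberwise (f := fun f => ({x | f x = 0} : Finset α))
    (t := powersetCard k univ) fun f hf => by simpa using (mem_filter.1 hf).2.1,
    sum_const_nat fun S hS => ?_, card_powersetCard, card_univ, mul_comm]
  rw [mem_powersetCard_univ] at hS
  rw [← hS, ← card_colorings_filter_zero_eq, filter_filter]
  congr 1
  refine filter_congr fun f _ => ?_
  constructor
  · rintro ⟨⟨-, hm⟩, hS⟩; exact ⟨hS, hm⟩
  · rintro ⟨rfl, hm⟩; exact ⟨⟨rfl, hm⟩, rfl⟩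

end

lemma card_filter_lt_add_one {β : Type*} (s : Finset β) (g : β → ℕ) (p : β → Prop)
    [DecidablePred p] (M : ℕ) :
    #{b ∈ s | g b < M + 1 ∧ p b} =
      #{b ∈ s | g b < M ∧ p b} + #{b ∈ s | g b = M ∧ p b} := by
  classical
  rw [← card_union_of_disjoint (disjoint_filter.2 fun b _ h₁ h₂ => h₁.1.ne h₂.1),
    ← filter_or]
  congr 1
  exact filter_congr fun b _ => by rw [Nat.lt_add_one_iff_lt_or_eq, or_and_right]

lemma cc_cons (i j M : ℕ) (m : Fin j → ℕ) :
    cc i (j + 1) (Fin.cons M m) =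
      #{f : Fin i → Fin (j + 1) | #{x | f x = 0} < M ∧ ∀ c, #{x | f x = c.succ} < m c} := by
  simp only [cc, Fin.forall_fin_succ, Fin.cons_zero, Fin.cons_succ]

lemma cc_cons_add_one (i j M : ℕ) (m : Fin j → ℕ) :
    cc i (j + 1) (Fin.cons (M + 1) m) =
      cc i (j + 1) (Fin.cons M m) + cc (i - M) j m * i.choose M := by
  rw [cc_cons, cc_cons, card_filter_lt_add_one, card_colorings_card_zero_eq, Fintype.card_fin]

theorem stmt16_general (i j : ℕ) (m₁ : ℕ) (m : Fin j → ℕ) (x : ℕ) :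
    cc i (j + 1) (Fin.cons (m₁ + x) m)
      = cc i (j + 1) (Fin.cons m₁ m)
        + ∑ r ∈ Finset.range x, cc (i - m₁ - r) j m * Nat.choose i (m₁ + r) := by
  induction x with
  | zero => simp
  | succ n ih =>
    rw [← Nat.add_assoc, cc_cons_add_one, ih, Finset.sum_range_succ, Nat.sub_sub, Nat.add_assoc]

theorem stmt16 (i j : ℕ) (m₁ : ℕ) (m : Fin j → ℕ) (hm₁ : 0 < m₁) (hm : ∀ c, 0 < m c)
    (x : ℕ) :
    cc i (j + 1) (Fin.cons (m₁ + x) m)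
      = cc i (j + 1) (Fin.cons m₁ m)
        + ∑ r ∈ Finset.range x, cc (i - m₁ - r) j m * Nat.choose i (m₁ + r) :=
  stmt16_general i j m₁ m x
end

section
/- For positive integers n₁ < n₂ ≤ t: C(t-n₁, n₂) · C(t-1, n₁) ≥ C(t-n₂, n₁) · C(t-1, n₂), with equality iff both sides are zero; in particular their ratio, when defined, equals (t-n₁)/(t-n₂) ≥ 1. -/
lemma key17 (n₁ n₂ t : ℕ) (h₁ : 0 < n₁) (h₁₂ : n₁ < n₂) (hs : n₁ + n₂ ≤ t) :
    Nat.choose (t - n₁) n₂ * Nat.choose (t - 1) n₁ * (t - n₂)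
      = Nat.choose (t - n₂) n₁ * Nat.choose (t - 1) n₂ * (t - n₁) := by
  have h2 : n₂ ≤ t - n₁ := by omega
  have h3 : n₁ ≤ t - n₂ := by omega
  have h4 : n₁ ≤ t - 1 := by omega
  have h5 : n₂ ≤ t - 1 := by omega
  have e1 : (t - n₁).factorial = (t - n₁) * (t - 1 - n₁).factorial := by
    rw [show t - n₁ = (t - 1 - n₁) + 1 by omega, Nat.factorial_succ]

  have e2 : (t - n₂).factorial = (t - n₂) * (t - 1 - n₂).factorial := by
    rw [show t - n₂ = (t - 1 - n₂) + 1 by omega, Nat.factorial_succ]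

  have e3 : t - n₁ - n₂ = t - n₂ - n₁ := by omega
  have hq : ((Nat.choose (t - n₁) n₂ * Nat.choose (t - 1) n₁ * (t - n₂) : ℕ) : ℚ)
      = ((Nat.choose (t - n₂) n₁ * Nat.choose (t - 1) n₂ * (t - n₁) : ℕ) : ℚ) := by
    push_cast [Nat.cast_choose ℚ h2, Nat.cast_choose ℚ h3, Nat.cast_choose ℚ h4,
      Nat.cast_choose ℚ h5]
    rw [e3]
    have f1 : (((t - n₁).factorial : ℕ) : ℚ) = ((t - n₁ : ℕ) : ℚ) * ((t - 1 - n₁).factorial : ℕ) := by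
      exact_mod_cast congrArg (Nat.cast : ℕ → ℚ) e1
    have f2 : (((t - n₂).factorial : ℕ) : ℚ) = ((t - n₂ : ℕ) : ℚ) * ((t - 1 - n₂).factorial : ℕ) := by
      exact_mod_cast congrArg (Nat.cast : ℕ → ℚ) e2
    rw [f1, f2]
    have nz : ∀ m : ℕ, ((m.factorial : ℕ) : ℚ) ≠ 0 := fun m => by
      exact_mod_cast m.factorial_ne_zero
    field_simp
  exact_mod_cast hq

theorem stmt17 (n₁ n₂ t : ℕ) (h₁ : 0 < n₁) (h₁₂ : n₁ < n₂) (h₂t : n₂ ≤ t) :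
    Nat.choose (t - n₁) n₂ * Nat.choose (t - 1) n₁
      ≥ Nat.choose (t - n₂) n₁ * Nat.choose (t - 1) n₂
    ∧ (Nat.choose (t - n₁) n₂ * Nat.choose (t - 1) n₁
          = Nat.choose (t - n₂) n₁ * Nat.choose (t - 1) n₂
        ↔ Nat.choose (t - n₁) n₂ * Nat.choose (t - 1) n₁ = 0
          ∧ Nat.choose (t - n₂) n₁ * Nat.choose (t - 1) n₂ = 0)
    ∧ Nat.choose (t - n₁) n₂ * Nat.choose (t - 1) n₁ * (t - n₂)
        = Nat.choose (t - n₂) n₁ * Nat.choose (t - 1) n₂ * (t - n₁) := by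
  by_cases hs : n₁ + n₂ ≤ t
  · have hkey := key17 n₁ n₂ t h₁ h₁₂ hs
    set L := Nat.choose (t - n₁) n₂ * Nat.choose (t - 1) n₁ with hL
    set R := Nat.choose (t - n₂) n₁ * Nat.choose (t - 1) n₂ with hR
    have hRpos : 0 < R := Nat.mul_pos (Nat.choose_pos (by omega)) (Nat.choose_pos (by omega))
    have hlt : t - n₂ < t - n₁ := by omega
    have hpos : 0 < t - n₂ := by omega
    have hLR : R < L := by
      by_contra h
      push_neg at h
      have : L * (t - n₂) < R * (t - n₁) :=
        lt_of_le_of_lt (Nat.mul_le_mul_right _ h) ((Nat.mul_lt_mul_left hRpos).mpr hlt)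
      omega
    refine ⟨le_of_lt hLR, ⟨fun h => absurd h (by omega), fun ⟨hl, _⟩ => by omega⟩, hkey⟩
  · have hL0 : Nat.choose (t - n₁) n₂ = 0 := Nat.choose_eq_zero_of_lt (by omega)
    have hR0 : Nat.choose (t - n₂) n₁ = 0 := Nat.choose_eq_zero_of_lt (by omega)
    simp [hL0, hR0]
end
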